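/- Let α, β, γ be complex numbers with (α+1)/2, (β+1)/2, γ not non-positive integers, with Re(2γ−α−β) < 1. Define S(α,β,γ) = ∑_{n=0}^∞ (1/2)_n (γ+1)_n / (((α+1)/2)_{n+1} ((β+1)/2)_{n+1}). Then 2γ(2γ−α−β−1)·S(α,β,γ)/4 − (2γ−α−1)(2γ−β−1)·S(α,β,γ−1)/4 + 1 = 0. -/

import Mathlib

/-- Pochhammer symbol (rising factorial) `(a)_n = a(a+1)⋯(a+n-1)`. -/
noncomputable def poch (a : ℂ) (n : ℕ) : ℂ := (ascPochhammer ℂ n).eval a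

/-- The series `S(α,β,γ) = ∑_{n=0}^∞ (1/2)_n (γ+1)_n / ((α+1)/2)_{n+1} ((β+1)/2)_{n+1}`. -/
noncomputable def S (α β γ : ℂ) : ℂ :=
  ∑' n : ℕ, poch (1 / 2) n * poch (γ + 1) n /
    (poch ((α + 1) / 2) (n + 1) * poch ((β + 1) / 2) (n + 1))

/-!
Write `a = (α + 1) / 2`, `b = (β + 1) / 2`, let `t_n(γ)` be the `n`-th summand of `S α β γ` and
`U_n = (1/2)_n (γ)_n / ((a)_n (b)_n)`. Using `γ (γ + 1)_n = (γ)_n (γ + n)` one checks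
`γ (γ - a - b + 1/2) t_n(γ) - (γ - a)(γ - b) t_n(γ - 1) = U_{n+1} - U_n`, so the left-hand side
of the identity telescopes to `lim U_n - U_0 = -1`.

Convergence comes from Gauss's limit `(c)_n ~ n! n^(c-1) / Γ(c)`, which is the convergence of
`GammaSeq` to `Γ`. It gives `U_n = O(n^(Re(γ - a - b) + 1/2))` and
`t_n(γ) = O(n^(Re(γ - a - b) - 1/2))`, and `Re(2γ - α - β) < 1` says exactly
`Re(a + b - γ) > 1/2`.
-/

open Filter Topology Asymptotics Complex
open scoped Nat

lemma poch_succ (c : ℂ) (n : ℕ) : poch c (n + 1) = poch c n * (c + n) :=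
  ascPochhammer_succ_eval n c

lemma poch_succ_left (c : ℂ) (n : ℕ) : poch c (n + 1) = c * poch (c + 1) n := by
  simp [poch, ascPochhammer_succ_left, Polynomial.eval_comp]

lemma poch_ne_zero {c : ℂ} (hc : ∀ k : ℕ, c ≠ -k) (n : ℕ) : poch c n ≠ 0 := by
  rw [poch, Ne, ascPochhammer_eval_eq_zero_iff]
  rintro ⟨k, -, hk⟩
  exact hc k (by rw [hk, neg_neg])

lemma poch_eq_prod (c : ℂ) (n : ℕ) : poch c n = ∏ j ∈ Finset.range n, (c + j) := by
  induction n with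
  | zero => simp [poch]
  | succ n ih => rw [poch_succ, ih, Finset.prod_range_succ]

lemma half_ne_neg_natCast (k : ℕ) : (1 / 2 : ℂ) ≠ -k := by
  intro h
  have h_re := congrArg re h
  norm_num at h_re
  linarith [(k.cast_nonneg : (0 : ℝ) ≤ k)]

lemma add_one_ne_neg_natCast {c : ℂ} (hc : ∀ k : ℕ, c ≠ -k) (k : ℕ) : c + 1 ≠ -k :=
  fun h => hc (k + 1) (by push_cast; linear_combination h)

lemma inv_GammaSeq (c : ℂ) (n : ℕ) : (GammaSeq c n)⁻¹ = poch c (n + 1) / (n ^ c * n !) := by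
  rw [GammaSeq, inv_div, poch_eq_prod]

lemma tendsto_poch_mul_cpow_div_factorial {c : ℂ} (hc : ∀ k : ℕ, c ≠ -k) :
    Tendsto (fun n : ℕ => poch c n * (n : ℂ) ^ (1 - c) / n !) atTop (𝓝 (Gamma c)⁻¹) := by
  have h := ((GammaSeq_tendsto_Gamma c).inv₀ (Gamma_ne_zero hc)).mul
    (tendsto_natCast_div_add_atTop c)
  rw [mul_one] at h
  refine h.congr' ?_
  filter_upwards [eventually_ne_atTop 0] with n hn
  have hn' : (n : ℂ) ≠ 0 := Nat.cast_ne_zero.2 hn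
  have hcn : (n : ℂ) + c ≠ 0 := fun h => hc n (by linear_combination h)
  rw [inv_GammaSeq, poch_succ, cpow_sub _ _ hn', cpow_one]
  field_simp
  ring

/-- The `n`-th term of the hypergeometric series `₃F₂(p, q, 1; a, b; 1)`. -/
noncomputable def pochRatio (p q a b : ℂ) (n : ℕ) : ℂ :=
  poch p n * poch q n / (poch a n * poch b n)

section pochRatio

variable {p q a b : ℂ} (hp : ∀ k : ℕ, p ≠ -k) (hq : ∀ k : ℕ, q ≠ -k)
  (ha : ∀ k : ℕ, a ≠ -k) (hb : ∀ k : ℕ, b ≠ -k)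
include hp hq ha hb

lemma tendsto_pochRatio_mul_cpow :
    Tendsto (fun n : ℕ => pochRatio p q a b n * (n : ℂ) ^ (a + b - p - q)) atTop
      (𝓝 (Gamma a * Gamma b / (Gamma p * Gamma q))) := by
  have h := ((tendsto_poch_mul_cpow_div_factorial hp).mul
    (tendsto_poch_mul_cpow_div_factorial hq)).div
    ((tendsto_poch_mul_cpow_div_factorial ha).mul (tendsto_poch_mul_cpow_div_factorial hb))
    (mul_ne_zero (inv_ne_zero (Gamma_ne_zero ha)) (inv_ne_zero (Gamma_ne_zero hb)))
  rw [← mul_inv, ← mul_inv, inv_div_inv] at h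
  refine h.congr' ?_
  filter_upwards [eventually_ne_atTop 0] with n hn
  have hn' : (n : ℂ) ≠ 0 := Nat.cast_ne_zero.2 hn
  have hcpow : (n : ℂ) ^ (1 - p) * (n : ℂ) ^ (1 - q)
      = (n : ℂ) ^ (a + b - p - q) * ((n : ℂ) ^ (1 - a) * (n : ℂ) ^ (1 - b)) := by
    simp only [← cpow_add _ _ hn']
    ring_nf
  have hpa := poch_ne_zero ha n
  have hpb := poch_ne_zero hb n
  have hna : (n : ℂ) ^ (1 - a) ≠ 0 := by simp [cpow_eq_zero_iff, hn']
  have hnb : (n : ℂ) ^ (1 - b) ≠ 0 := by simp [cpow_eq_zero_iff, hn']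
  have hfac : (n ! : ℂ) ≠ 0 := Nat.cast_ne_zero.2 n.factorial_ne_zero
  simp only [Pi.div_apply, pochRatio]
  field_simp
  linear_combination poch p n * poch q n * hcpow

lemma pochRatio_isBigO :
    pochRatio p q a b =O[atTop] fun n : ℕ => (n : ℝ) ^ (p + q - a - b).re := by
  have hpow : (fun n : ℕ => (n : ℂ) ^ (p + q - a - b)) =O[atTop]
      fun n : ℕ => (n : ℝ) ^ (p + q - a - b).re := by
    refine IsBigO.of_bound 1 ?_
    filter_upwards [eventually_ne_atTop 0] with n hn
    rw [norm_natCast_cpow_of_pos (Nat.pos_of_ne_zero hn), one_mul,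
      Real.norm_of_nonneg (by positivity)]
  refine (((tendsto_pochRatio_mul_cpow hp hq ha hb).isBigO_one ℝ).mul hpow).congr' ?_ ?_
  · filter_upwards [eventually_ne_atTop 0] with n hn
    have hn' : (n : ℂ) ≠ 0 := Nat.cast_ne_zero.2 hn
    rw [mul_assoc, ← cpow_add _ _ hn', show a + b - p - q + (p + q - a - b) = 0 by ring,
      cpow_zero, mul_one]
  · exact Eventually.of_forall fun n => one_mul _

lemma summable_pochRatio (h : (p + q - a - b).re < -1) : Summable (pochRatio p q a b) :=
  summable_of_isBigO_nat (Real.summable_nat_rpow.2 h) (pochRatio_isBigO hp hq ha hb)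

lemma tendsto_pochRatio_zero (h : (p + q - a - b).re < 0) :
    Tendsto (pochRatio p q a b) atTop (𝓝 0) := by
  refine (pochRatio_isBigO hp hq ha hb).trans_tendsto ?_
  simpa [Function.comp_def] using
    (tendsto_rpow_neg_atTop (neg_pos.2 h)).comp tendsto_natCast_atTop_atTop

end pochRatio

lemma hasSum_sub_of_tendsto {G : Type*} [AddCommGroup G] [TopologicalSpace G]
    [IsTopologicalAddGroup G] [T2Space G] {f : ℕ → G} {l : G}
    (hs : Summable fun n => f (n + 1) - f n) (hf : Tendsto f atTop (𝓝 l)) :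
    HasSum (fun n => f (n + 1) - f n) (l - f 0) := by
  have h := hs.hasSum.tendsto_sum_nat
  simp only [Finset.sum_range_sub] at h
  rw [← tendsto_nhds_unique h (hf.sub_const _)]
  exact hs.hasSum

/-- The `n`-th summand of `S α β γ` is `sTerm ((α + 1) / 2) ((β + 1) / 2) γ n`. -/
noncomputable def sTerm (a b γ : ℂ) (n : ℕ) : ℂ :=
  poch (1 / 2) n * poch (γ + 1) n / (poch a (n + 1) * poch b (n + 1))

lemma sTerm_eq_pochRatio (a b γ : ℂ) (n : ℕ) :
    sTerm a b γ n = pochRatio (1 / 2) (γ + 1) (a + 1) (b + 1) n / (a * b) := by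
  rw [sTerm, pochRatio, poch_succ_left a, poch_succ_left b, div_div]
  ring

lemma summable_sTerm {a b γ : ℂ} (ha : ∀ k : ℕ, a ≠ -k) (hb : ∀ k : ℕ, b ≠ -k)
    (hγ : ∀ k : ℕ, γ + 1 ≠ -k) (h : 1 / 2 < (a + b - γ).re) : Summable (sTerm a b γ) := by
  have h' : (1 / 2 + (γ + 1) - (a + 1) - (b + 1)).re < -1 := by
    simp only [sub_re, add_re] at h ⊢
    norm_num at h ⊢
    linarith
  rw [show sTerm a b γ = _ from funext (sTerm_eq_pochRatio a b γ)]
  exact (summable_pochRatio half_ne_neg_natCast hγ (add_one_ne_neg_natCast ha)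
    (add_one_ne_neg_natCast hb) h').div_const (a * b)

lemma sTerm_telescope {a b : ℂ} (ha : ∀ k : ℕ, a ≠ -k) (hb : ∀ k : ℕ, b ≠ -k) (γ : ℂ) (n : ℕ) :
    γ * (γ - a - b + 1 / 2) * sTerm a b γ n - (γ - a) * (γ - b) * sTerm a b (γ - 1) n =
      pochRatio (1 / 2) γ a b (n + 1) - pochRatio (1 / 2) γ a b n := by
  have hγ : γ * poch (γ + 1) n = poch γ n * (γ + n) := by
    rw [← poch_succ_left, poch_succ]
  have han : a + n ≠ 0 := fun h => ha n (by linear_combination h)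
  have hbn : b + n ≠ 0 := fun h => hb n (by linear_combination h)
  have hpa := poch_ne_zero ha n
  have hpb := poch_ne_zero hb n
  rw [sTerm, sTerm, pochRatio, pochRatio, sub_add_cancel, poch_succ (1 / 2), poch_succ γ,
    poch_succ a, poch_succ b]
  field_simp
  linear_combination 2 * (γ - a - b + 1 / 2) * poch (1 / 2) n * hγ

lemma tsum_sTerm_combination {a b γ : ℂ} (ha : ∀ k : ℕ, a ≠ -k) (hb : ∀ k : ℕ, b ≠ -k)
    (hγ : ∀ k : ℕ, γ ≠ -k) (h : 1 / 2 < (a + b - γ).re) :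
    γ * (γ - a - b + 1 / 2) * ∑' n, sTerm a b γ n
      - (γ - a) * (γ - b) * ∑' n, sTerm a b (γ - 1) n = -1 := by
  have hS := (summable_sTerm ha hb (add_one_ne_neg_natCast hγ) h).hasSum
  have hS' := (summable_sTerm ha hb (fun k => by rw [sub_add_cancel]; exact hγ k)
    (by simp only [sub_re, add_re, one_re] at h ⊢; linarith)).hasSum
  have hU : Tendsto (pochRatio (1 / 2) γ a b) atTop (𝓝 0) := by
    refine tendsto_pochRatio_zero half_ne_neg_natCast hγ ha hb ?_
    simp only [sub_re, add_re] at h ⊢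
    norm_num at h ⊢
    linarith
  have hsum := (hS.mul_left (γ * (γ - a - b + 1 / 2))).sub (hS'.mul_left ((γ - a) * (γ - b)))
  simp only [sTerm_telescope ha hb] at hsum
  simpa [pochRatio, poch] using hsum.unique (hasSum_sub_of_tendsto hsum.summable hU)

theorem stmt6 (α β γ : ℂ)
    (hα : ∀ k : ℕ, (α + 1) / 2 ≠ -(k : ℂ))
    (hβ : ∀ k : ℕ, (β + 1) / 2 ≠ -(k : ℂ))
    (hγ : ∀ k : ℕ, γ ≠ -(k : ℂ))
    (hre : (2 * γ - α - β).re < 1) :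
    2 * γ * (2 * γ - α - β - 1) * (S α β γ / 4) -
      (2 * γ - α - 1) * (2 * γ - β - 1) * (S α β (γ - 1) / 4) + 1 = 0 := by
  have hS (δ : ℂ) : S α β δ = ∑' n, sTerm ((α + 1) / 2) ((β + 1) / 2) δ n := rfl
  have h : 1 / 2 < ((α + 1) / 2 + (β + 1) / 2 - γ).re := by
    simp only [sub_re, add_re, mul_re] at hre ⊢
    norm_num at hre ⊢
    linarith
  rw [hS, hS]
  linear_combination tsum_sTerm_combination hα hβ hγ h
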